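/- Let (Ω, μ) be a probability space, d : Ω → ℝ and κ : Ω → ℝ^r random variables, and v : Ω → ℝ^r a random vector, with all entries of d·κ, κκᵀ, and (κκᵀ)·v integrable and v integrable. Assume the conditioned modified independence hypothesis in the uncorrelatedness form: E[(κ_i κ_j) v_k] = E[κ_i κ_j] E[v_k] for all indices i, j, k. Let R̃ := E[κκᵀ], p̃ := E[dκ], assume R̃ is invertible, and set α* := R̃⁻¹ p̃. Define the updated random vector v' := v + η (d − κᵀ(v + α*)) κ for a real step size η. Then E[v'] = (I_r − ηR̃) E[v]. -/

import Mathlib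

/-!
Since `(κᵀ w) κ = (κ κᵀ) w`, the update is `v' = v + η (d κ - κκᵀ v - κκᵀ α*)`, which is linear in
the outer product `κκᵀ`. Taking expectations, CMIA factors `E[κκᵀ v] = R̃ E[v]`, while
`E[κκᵀ α*] = R̃ α* = p̃` cancels `E[d κ] = p̃`.
-/

open Matrix MeasureTheory

theorem mul_sub_dotProduct_add_smul {n R : Type*} [Fintype n] [CommRing R] (d η : R)
    (κ v α : n → R) :
    (η * (d - κ ⬝ᵥ (v + α))) • κ =
      η • (d • κ - vecMulVec κ κ *ᵥ v - vecMulVec κ κ *ᵥ α) := by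
  simp only [vecMulVec_mulVec, op_smul_eq_smul, dotProduct_add]
  module

section MulVec

variable {Ω m n : Type*} [MeasurableSpace Ω] {μ : Measure Ω} [Fintype n]
  {A : Ω → Matrix m n ℝ}

theorem integrable_mulVec_apply {x : Ω → n → ℝ}
    (hAx : ∀ i j, Integrable (fun ω => A ω i j * x ω j) μ) (i : m) :
    Integrable (fun ω => (A ω *ᵥ x ω) i) μ :=
  integrable_finsetSum _ fun j _ => hAx i j

theorem integral_mulVec_apply_of_uncorrelated {x : Ω → n → ℝ}
    (hAx : ∀ i j, Integrable (fun ω => A ω i j * x ω j) μ)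
    (huncorr : ∀ i j, ∫ ω, A ω i j * x ω j ∂μ = (∫ ω, A ω i j ∂μ) * ∫ ω, x ω j ∂μ)
    (i : m) :
    ∫ ω, (A ω *ᵥ x ω) i ∂μ =
      ((of fun i j => ∫ ω, A ω i j ∂μ) *ᵥ fun j => ∫ ω, x ω j ∂μ) i := by
  simp only [mulVec, dotProduct, of_apply]
  rw [integral_finsetSum _ fun j _ => hAx i j]
  exact Finset.sum_congr rfl fun j _ => huncorr i j

theorem integral_mulVec_const_apply (hA : ∀ i j, Integrable (fun ω => A ω i j) μ)
    (c : n → ℝ) (i : m) :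
    ∫ ω, (A ω *ᵥ c) i ∂μ = ((of fun i j => ∫ ω, A ω i j ∂μ) *ᵥ c) i := by
  simp only [mulVec, dotProduct, of_apply]
  rw [integral_finsetSum _ fun j _ => (hA i j).mul_const _]
  exact Finset.sum_congr rfl fun j _ => integral_mul_const _ _

end MulVec

theorem natural_klms_mean_recursion_general {Ω : Type*} [MeasurableSpace Ω]
    (μ : Measure Ω) {r : ℕ}
    (d : Ω → ℝ) (κ v : Ω → Fin r → ℝ) (η : ℝ)
    (hdκ : ∀ i, Integrable (fun ω => d ω * κ ω i) μ)
    (hκκ : ∀ i j, Integrable (fun ω => κ ω i * κ ω j) μ)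
    (hκκv : ∀ i j k, Integrable (fun ω => κ ω i * κ ω j * v ω k) μ)
    (hv : ∀ k, Integrable (fun ω => v ω k) μ)
    (hCMIA : ∀ i j k, ∫ ω, κ ω i * κ ω j * v ω k ∂μ =
      (∫ ω, κ ω i * κ ω j ∂μ) * ∫ ω, v ω k ∂μ)
    (R : Matrix (Fin r) (Fin r) ℝ)
    (hRdef : R = Matrix.of fun i j => ∫ ω, κ ω i * κ ω j ∂μ)
    (hRunit : IsUnit R)
    (p : Fin r → ℝ) (hpdef : p = fun i => ∫ ω, d ω * κ ω i ∂μ)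
    (αstar : Fin r → ℝ) (hαstar : αstar = R⁻¹ *ᵥ p)
    (v' : Ω → Fin r → ℝ)
    (hupd : ∀ ω, v' ω = v ω + (η * (d ω - κ ω ⬝ᵥ (v ω + αstar))) • κ ω) :
    (fun k => ∫ ω, v' ω k ∂μ) =
      ((1 : Matrix (Fin r) (Fin r) ℝ) - η • R) *ᵥ fun k => ∫ ω, v ω k ∂μ := by
  have hRα : R *ᵥ αstar = p := by
    rw [hαstar, mulVec_mulVec, mul_nonsing_inv _ ((isUnit_iff_isUnit_det R).mp hRunit),
      one_mulVec]
  funext k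
  have hKv_int : Integrable (fun ω => (vecMulVec (κ ω) (κ ω) *ᵥ v ω) k) μ :=
    integrable_mulVec_apply (fun i j => hκκv i j j) k
  have hKα_int : Integrable (fun ω => (vecMulVec (κ ω) (κ ω) *ᵥ αstar) k) μ :=
    integrable_mulVec_apply (fun i j => (hκκ i j).mul_const (αstar j)) k
  have hKv : ∫ ω, (vecMulVec (κ ω) (κ ω) *ᵥ v ω) k ∂μ =
      (R *ᵥ fun j => ∫ ω, v ω j ∂μ) k := by
    rw [hRdef]
    exact integral_mulVec_apply_of_uncorrelated (fun i j => hκκv i j j)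
      (fun i j => hCMIA i j j) k
  have hKα : ∫ ω, (vecMulVec (κ ω) (κ ω) *ᵥ αstar) k ∂μ = p k := by
    rw [← hRα, hRdef]
    exact integral_mulVec_const_apply hκκ αstar k
  simp only [hupd, mul_sub_dotProduct_add_smul, Pi.add_apply, Pi.smul_apply, Pi.sub_apply,
    smul_eq_mul]
  rw [integral_add (hv k) (by fun_prop), integral_const_mul,
    integral_sub (by fun_prop) hKα_int, integral_sub (hdκ k) hKv_int, hKv, hKα, hpdef,
    sub_mulVec, smul_mulVec, one_mulVec]
  simp only [Pi.sub_apply, Pi.smul_apply, smul_eq_mul]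
  ring

/-- **One-step mean weight-error recursion under CMIA.**
With `R̃ := E[κ κᵀ]`, `p̃ := E[d κ]`, `α* := R̃⁻¹ p̃`, and the update
`v' := v + η (d − κᵀ(v + α*)) κ`, the conditioned modified independence
assumption gives `E[v'] = (I_r − η R̃) E[v]`. -/
theorem natural_klms_mean_recursion {Ω : Type*} [MeasurableSpace Ω]
    (μ : Measure Ω) [IsProbabilityMeasure μ] {r : ℕ}
    (d : Ω → ℝ) (κ v : Ω → Fin r → ℝ) (η : ℝ)
    (hdκ : ∀ i, Integrable (fun ω => d ω * κ ω i) μ)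
    (hκκ : ∀ i j, Integrable (fun ω => κ ω i * κ ω j) μ)
    (hκκv : ∀ i j k, Integrable (fun ω => κ ω i * κ ω j * v ω k) μ)
    (hv : ∀ k, Integrable (fun ω => v ω k) μ)
    (hCMIA : ∀ i j k, ∫ ω, κ ω i * κ ω j * v ω k ∂μ =
      (∫ ω, κ ω i * κ ω j ∂μ) * ∫ ω, v ω k ∂μ)
    (R : Matrix (Fin r) (Fin r) ℝ)
    (hRdef : R = Matrix.of fun i j => ∫ ω, κ ω i * κ ω j ∂μ)
    (hRunit : IsUnit R)
    (p : Fin r → ℝ) (hpdef : p = fun i => ∫ ω, d ω * κ ω i ∂μ)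
    (αstar : Fin r → ℝ) (hαstar : αstar = R⁻¹ *ᵥ p)
    (v' : Ω → Fin r → ℝ)
    (hupd : ∀ ω, v' ω = v ω + (η * (d ω - κ ω ⬝ᵥ (v ω + αstar))) • κ ω) :
    (fun k => ∫ ω, v' ω k ∂μ) =
      ((1 : Matrix (Fin r) (Fin r) ℝ) - η • R) *ᵥ fun k => ∫ ω, v ω k ∂μ :=
  natural_klms_mean_recursion_general μ d κ v η hdκ hκκ hκκv hv hCMIA R hRdef hRunit p hpdef αstar
    hαstar v' hupd
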